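/- For team properties C, D with D quasi upward closed and both containing the empty team, the strict split-disjunction {T | ∃ T₁ T₂, T₁ ∩ T₂ = ∅ ∧ T₁ ∪ T₂ = T ∧ T₁ ∈ C ∧ T₂ ∈ D} equals C ∪ D. -/

import Mathlib

def QuasiUpwardClosed {P : Type} (C : Set (Set (P → Bool))) : Prop :=
  (∅ : Set (P → Bool)) ∈ C ∧
    ∀ T ∈ C, T ≠ ∅ → ∀ S : Set (P → Bool), T ⊆ S → S ∈ C

theorem QuasiUpwardClosed.union_mem {P : Type} {D : Set (Set (P → Bool))}
    (hD : QuasiUpwardClosed D) {T₁ T₂ : Set (P → Bool)} (h₂ : T₂ ∈ D) (hne : T₂ ≠ ∅) :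
    T₁ ∪ T₂ ∈ D :=
  hD.2 T₂ h₂ hne _ Set.subset_union_right

theorem strict_split_disjunction_eq_union_general
    (P : Type) (C D : Set (Set (P → Bool)))
    (hCe : (∅ : Set (P → Bool)) ∈ C)
    (hD : QuasiUpwardClosed D) :
    {T : Set (P → Bool) |
        ∃ T₁ T₂, T₁ ∩ T₂ = ∅ ∧ T₁ ∪ T₂ = T ∧ T₁ ∈ C ∧ T₂ ∈ D} = C ∪ D := by
  ext T
  constructor
  · rintro ⟨T₁, T₂, -, rfl, h₁, h₂⟩
    rcases eq_or_ne T₂ ∅ with rfl | hne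
    · rw [Set.union_empty]
      exact Or.inl h₁
    · exact Or.inr (hD.union_mem h₂ hne)
  · rintro (hTC | hTD)
    · exact ⟨T, ∅, Set.inter_empty T, Set.union_empty T, hTC, hD.1⟩
    · exact ⟨∅, T, Set.empty_inter T, Set.empty_union T, hCe, hTD⟩

theorem strict_split_disjunction_eq_union
    (P : Type) [Fintype P] (C D : Set (Set (P → Bool)))
    (hCe : (∅ : Set (P → Bool)) ∈ C)
    (hD : QuasiUpwardClosed D) :
    {T : Set (P → Bool) |
        ∃ T₁ T₂, T₁ ∩ T₂ = ∅ ∧ T₁ ∪ T₂ = T ∧ T₁ ∈ C ∧ T₂ ∈ D} = C ∪ D :=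
  strict_split_disjunction_eq_union_general P C D hCe hD
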